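/- arXiv:2204.01077 — 2 statements merged into one kernel-verified Lean document; each statement's English description precedes it below -/
import Mathlib

section
/- Let d ≥ 2, let y ∈ ℝ^d, let R ≥ (18d − 1/2)·√d, let Σ = {x ∈ ℝ^d : ‖x − y‖ = R}, and let θ₀ = arccos(1/(3√d)). Then for every unit vector v ∈ ℝ^d, the cone K = {x ∈ ℝ^d : ⟨x − y, v⟩ ≥ ‖x − y‖·cos θ₀} contains a pole b of Σ (i.e., a point of the form y ± R·e_i with e_i a standard basis vector) and a point a ∈ ℤ^d such that ‖a − y‖ ≤ R, ‖a − b‖ ≤ √(2√d·R), and the Euclidean distance from a to Σ is at most 2√d·(2√d/R)^{1 − 1/2^{d−1}}. -/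
open Set Metric MeasureTheory

noncomputable section

/-- The integer lattice `ℤ^d` as a subset of `ℝ^d`. -/
def intLattice (d : ℕ) : Set (EuclideanSpace ℝ (Fin d)) :=
  {x | ∀ i, ∃ n : ℤ, x i = (n : ℝ)}

/-- The canonical embedding of integer vectors into `ℝ^d`. -/
def toEuc (d : ℕ) (a : Fin d → ℤ) : EuclideanSpace ℝ (Fin d) :=
  WithLp.toLp 2 (fun i => (a i : ℝ))

/-- The `k`-th Brillouin zone of `a` in `A`: points `x` such that at most `k-1` points of
`A \ {a}` are strictly closer to `x` than `a`, and at least `k-1` points of `A \ {a}` are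
at distance at most `dist x a` from `x`. -/
def brillouinZone (d k : ℕ) (A : Set (EuclideanSpace ℝ (Fin d)))
    (a : EuclideanSpace ℝ (Fin d)) : Set (EuclideanSpace ℝ (Fin d)) :=
  {x | {p | p ∈ A \ {a} ∧ dist x p < dist x a}.encard ≤ ((k - 1 : ℕ) : ℕ∞) ∧
       ((k - 1 : ℕ) : ℕ∞) ≤ {p | p ∈ A \ {a} ∧ dist x p ≤ dist x a}.encard}

/-- The set of points with exactly `k-1` points of `A \ {a}` strictly closer than `a` and
no point of `A \ {a}` at exactly distance `dist x a`; its connected components are the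
chambers of the `k`-th Brillouin zone. -/
def chamberRegion (d k : ℕ) (A : Set (EuclideanSpace ℝ (Fin d)))
    (a : EuclideanSpace ℝ (Fin d)) : Set (EuclideanSpace ℝ (Fin d)) :=
  {x | {p | p ∈ A \ {a} ∧ dist x p < dist x a}.encard = ((k - 1 : ℕ) : ℕ∞) ∧
       ∀ p ∈ A \ {a}, dist x p ≠ dist x a}

/-- The chambers of the `k`-th Brillouin zone of `a` in `A`. -/
def chambers (d k : ℕ) (A : Set (EuclideanSpace ℝ (Fin d)))
    (a : EuclideanSpace ℝ (Fin d)) : Set (Set (EuclideanSpace ℝ (Fin d))) :=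
  {C | ∃ x ∈ chamberRegion d k A a, C = connectedComponentIn (chamberRegion d k A a) x}

/-- `ν_d`, the volume of the unit ball in `ℝ^d`. -/
def unitBallVol (d : ℕ) : ℝ := Real.pi ^ ((d : ℝ) / 2) / Real.Gamma ((d : ℝ) / 2 + 1)

/-- Membership in the cone with apex `y`, direction `v`, and angle `θ`. -/
def inCone (d : ℕ) (y v : EuclideanSpace ℝ (Fin d)) (θ : ℝ)
    (x : EuclideanSpace ℝ (Fin d)) : Prop :=
  ‖x - y‖ * Real.cos θ ≤ (inner ℝ (x - y) v : ℝ)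

namespace PolesCones

/-- Iterated bound function: `ub n u` bounds residual after `n` greedy steps from `u`. -/
noncomputable def ub : ℕ → ℝ → ℝ
  | 0, u => u
  | n+1, u => ub n (2 * Real.sqrt u)

lemma ub_mono (n : ℕ) : ∀ u u' : ℝ, u ≤ u' → ub n u ≤ ub n u' := by
  induction n with
  | zero => intro u u' h; exact h
  | succ n ih => intro u u' h; exact ih _ _ (by gcongr)

lemma ub_le (n : ℕ) : ∀ r : ℝ, 1 ≤ r → ub n (4 * r) ≤ 4 * r ^ (((2:ℝ) ^ n)⁻¹) := by
  induction n with
  | zero =>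
      intro r hr
      simp only [ub, pow_zero, inv_one, Real.rpow_one, le_refl]
  | succ n ih =>
      intro r hr
      have hr0 : (0:ℝ) ≤ r := le_trans zero_le_one hr
      have hs : Real.sqrt (4*r) = 2 * Real.sqrt r := by
        rw [show (4:ℝ)*r = 2^2*r by ring, Real.sqrt_mul (by positivity),
          Real.sqrt_sq (by norm_num)]
      have h1 : ub (n+1) (4*r) = ub n (4 * Real.sqrt r) := by
        show ub n (2 * Real.sqrt (4*r)) = _
        rw [hs]; ring_nf
      rw [h1]
      have hsr : 1 ≤ Real.sqrt r := Real.one_le_sqrt.2 hr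
      refine le_trans (ih _ hsr) ?_
      have : Real.sqrt r ^ (((2:ℝ) ^ n)⁻¹) = r ^ (((2:ℝ) ^ (n+1))⁻¹) := by
        rw [Real.sqrt_eq_rpow, ← Real.rpow_mul hr0]
        congr 1
        rw [pow_succ]
        ring
      rw [this]

variable {d : ℕ}

/-- one greedy step -/
noncomputable def gstep (yj L t : ℝ) : ℝ :=
  if L + 1 ≤ t then (⌊yj + Real.sqrt (t - L)⌋ : ℝ) - yj
  else (round yj : ℝ) - yj

/-- greedy choice of integer coordinates along a list of indices -/
noncomputable def greedy (y : Fin d → ℝ) (L : ℝ) : List (Fin d) → ℝ → Fin d → ℝ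
  | [], _ => fun _ => 0
  | j :: l, t =>
      Function.update (greedy y L l (t - gstep (y j) L t ^ 2)) j (gstep (y j) L t)

lemma sum_update (f : Fin d → ℝ) (i : Fin d) (c : ℝ) (g : Fin d → ℝ → ℝ)
    (hf : g i (f i) = 0) :
    ∑ j, g j (Function.update f i c j) = g i c + ∑ j, g j (f j) := by
  rw [← Finset.sum_erase_add _ _ (Finset.mem_univ i),
      ← Finset.sum_erase_add _ (fun j => g j (f j)) (Finset.mem_univ i)]
  rw [Finset.sum_congr rfl (fun j hj => by
    rw [Function.update_of_ne (Finset.ne_of_mem_erase hj)])]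
  simp [hf]
  ring

lemma greedy_spec (y : Fin d → ℝ) (L : ℝ) (hL1 : 1 ≤ L) :
    ∀ l : List (Fin d), l.Nodup →
    ∀ t : ℝ, 1 + (l.length : ℝ) / 4 ≤ t → 1 + (l.length : ℝ) / 4 ≤ L →
      (∀ j, j ∉ l → greedy y L l t j = 0) ∧
      (∀ j ∈ l, ∃ n : ℤ, y j + greedy y L l t j = (n : ℝ)) ∧
      1 ≤ t - ∑ j, (greedy y L l t j) ^ 2 ∧
      t - ∑ j, (greedy y L l t j) ^ 2 ≤ max (L + 1) (L + ub l.length (t - L)) := by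
  intro l
  induction l with
  | nil =>
      intro _ t ht _
      have h0 : ∑ j : Fin d, (greedy y L [] t j)^2 = 0 := by
        simp [show greedy y L [] t = fun _ => 0 from rfl]
      simp only [List.length_nil, Nat.cast_zero, zero_div] at ht
      refine ⟨fun j _ => rfl, by simp, ?_, ?_⟩
      · rw [h0]; linarith
      · rw [h0]
        have he : L + ub 0 (t - L) = t := by simp [ub]
        rw [sub_zero]
        exact le_max_of_le_right he.ge
  | cons j l IH =>
      intro hnd t ht htL
      obtain ⟨hj, hl⟩ := List.nodup_cons.1 hnd
      have hlen : ((j :: l).length : ℝ) = (l.length : ℝ) + 1 := by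
        simp
      set g : ℝ := gstep (y j) L t with hg
      set t' : ℝ := t - g ^ 2 with ht'def
      -- bounds on g and t'
      have hkey : (1 + (l.length:ℝ)/4 ≤ t') ∧ (∃ n : ℤ, y j + g = (n:ℝ)) ∧
          ((L + 1 ≤ t) → (L ≤ t' ∧ t' - L ≤ 2 * Real.sqrt (t - L))) := by
        by_cases hc : L + 1 ≤ t
        · have hg_eq : g = (⌊y j + Real.sqrt (t - L)⌋ : ℝ) - y j := by
            rw [hg, gstep, if_pos hc]
          have htL1 : (1:ℝ) ≤ t - L := by linarith
          set w : ℝ := Real.sqrt (t - L) with hw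
          have hw1 : 1 ≤ w := Real.one_le_sqrt.2 htL1
          have hwsq : w ^ 2 = t - L := Real.sq_sqrt (by linarith)
          have hg_le : g ≤ w := by
            rw [hg_eq]
            have := Int.floor_le (y j + w)
            linarith
          have hg_gt : w - 1 < g := by
            rw [hg_eq]
            have := Int.lt_floor_add_one (y j + w)
            linarith
          have hg0 : 0 ≤ g := by linarith
          have hgsq_le : g ^ 2 ≤ t - L := by
            calc g ^ 2 ≤ w ^ 2 := by nlinarith
            _ = t - L := hwsq
          have hgsq_ge : (w - 1)^2 ≤ g ^ 2 := by nlinarith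
          refine ⟨?_, ⟨⌊y j + w⌋, by rw [hg_eq]; ring⟩, fun _ => ⟨by linarith, ?_⟩⟩
          · have : L ≤ t' := by simp only [ht'def]; linarith
            have hlL : 1 + ((l.length:ℝ)+1)/4 ≤ L := by rw [← hlen]; exact htL
            have : 1 + (l.length:ℝ)/4 ≤ L := by linarith
            linarith [this.trans ‹L ≤ t'›]
          · simp only [ht'def]
            nlinarith
        · have hg_eq : g = (round (y j) : ℝ) - y j := by
            rw [hg, gstep, if_neg hc]
          have habs : |g| ≤ 1/2 := by
            rw [hg_eq, abs_sub_comm]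
            exact abs_sub_round (y j)
          have hgsq : g ^ 2 ≤ 1/4 := by
            nlinarith [sq_abs g, abs_nonneg g]
          refine ⟨?_, ⟨round (y j), by rw [hg_eq]; ring⟩, fun h => absurd h hc⟩
          have : 1 + ((l.length:ℝ)+1)/4 ≤ t := by rw [← hlen]; exact ht
          simp only [ht'def]
          linarith
      obtain ⟨ht'1, hgint, hnormal⟩ := hkey
      have htL' : 1 + (l.length:ℝ)/4 ≤ L := by
        have : 1 + ((l.length:ℝ)+1)/4 ≤ L := by rw [← hlen]; exact htL
        linarith
      obtain ⟨P1, P2, P3, P4⟩ := IH hl t' ht'1 htL'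
      have hGval : greedy y L (j :: l) t = Function.update (greedy y L l t') j g := rfl
      have hG'j : greedy y L l t' j = 0 := P1 j hj
      have hsum : ∑ k, (greedy y L (j::l) t k) ^ 2
          = g^2 + ∑ k, (greedy y L l t' k)^2 := by
        rw [hGval]
        exact sum_update _ j g (fun _ x => x^2) (by rw [hG'j]; ring)
      have hsum_nonneg : (0:ℝ) ≤ ∑ k, (greedy y L l t' k)^2 :=
        Finset.sum_nonneg fun k _ => sq_nonneg _
      refine ⟨?_, ?_, ?_, ?_⟩
      · intro k hk
        have hk1 : k ≠ j := fun h => hk (h ▸ (List.mem_cons_self : j ∈ j :: l))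
        have hk2 : k ∉ l := fun h => hk (List.mem_cons_of_mem j h)
        rw [hGval, Function.update_of_ne hk1]
        exact P1 k hk2
      · intro k hk
        rcases List.mem_cons.1 hk with h | h
        · subst h
          rw [hGval, Function.update_self]
          exact hgint
        · have hk1 : k ≠ j := fun he => hj (he ▸ h)
          rw [hGval, Function.update_of_ne hk1]
          exact P2 k h
      · rw [hsum]
        have : t - (g^2 + ∑ k, (greedy y L l t' k)^2) = t' - ∑ k, (greedy y L l t' k)^2 := by
          rw [ht'def]; ring
        rw [this]; exact P3
      · rw [hsum]
        have heq : t - (g^2 + ∑ k, (greedy y L l t' k)^2)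
            = t' - ∑ k, (greedy y L l t' k)^2 := by rw [ht'def]; ring
        rw [heq]
        by_cases hc : L + 1 ≤ t
        · obtain ⟨ht'L, ht'ub⟩ := hnormal hc
          rcases le_max_iff.1 P4 with h | h
          · exact le_max_of_le_left h
          · refine le_max_of_le_right (h.trans ?_)
            have h3 : ub l.length (t' - L) ≤ ub l.length (2 * Real.sqrt (t - L)) :=
              ub_mono _ _ _ ht'ub
            have h2 : ub (l.length + 1) (t - L) = ub l.length (2 * Real.sqrt (t - L)) := rfl
            simp only [List.length_cons, h2]
            linarith
        · push_neg at hc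
          have : t' - ∑ k, (greedy y L l t' k)^2 ≤ t' := by linarith
          have ht't : t' ≤ t := by
            simp only [ht'def]; nlinarith [sq_nonneg g]
          exact le_max_of_le_left (by linarith)


lemma norm_sq_eq {d : ℕ} (x : EuclideanSpace ℝ (Fin d)) : ‖x‖ ^ 2 = ∑ j, x j ^ 2 := by
  rw [EuclideanSpace.norm_eq, Real.sq_sqrt (by positivity)]
  simp [sq_abs]

lemma inner_eq {d : ℕ} (x v : EuclideanSpace ℝ (Fin d)) :
    (inner ℝ x v : ℝ) = ∑ j, x j * v j := by
  simp [PiLp.inner_apply, RCLike.inner_apply, conj_trivial, mul_comm]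

lemma two_mul_le_two_pow : ∀ n : ℕ, 1 ≤ n → 2 * n ≤ 2 ^ n := by
  intro n
  induction n with
  | zero => omega
  | succ n ih =>
      intro _
      rcases Nat.eq_or_lt_of_le (Nat.zero_le n) with h | h
      · simp [← h]
      · have h1 : 1 ≤ n := h
        have := ih h1
        have h2 : 2 ≤ 2 ^ n := by
          calc 2 ≤ 2 * n := by omega
          _ ≤ 2 ^ n := this
        rw [pow_succ]
        omega

end PolesCones

set_option maxHeartbeats 1000000 in
/-- For a sphere of radius `R ≥ (18d - 1/2)√d` and any unit direction `v`,
the cone with apex at the center and angle `θ₀ = arccos(1/(3√d))` contains a pole of the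
sphere together with a nearby integer point. -/
theorem poles_and_cones (d : ℕ) (hd : 2 ≤ d) (y : EuclideanSpace ℝ (Fin d)) (R : ℝ)
    (hR : (18 * (d : ℝ) - 1 / 2) * Real.sqrt d ≤ R)
    (v : EuclideanSpace ℝ (Fin d)) (hv : ‖v‖ = 1) :
    ∃ (i : Fin d) (s : ℝ), (s = 1 ∨ s = -1) ∧
      inCone d y v (Real.arccos (1 / (3 * Real.sqrt d)))
        (y + (s * R) • EuclideanSpace.single i (1 : ℝ)) ∧
      ∃ a ∈ intLattice d,
        inCone d y v (Real.arccos (1 / (3 * Real.sqrt d))) a ∧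
        ‖a - y‖ ≤ R ∧
        ‖a - (y + (s * R) • EuclideanSpace.single i (1 : ℝ))‖
          ≤ Real.sqrt (2 * Real.sqrt d * R) ∧
        Metric.infDist a (Metric.sphere y R)
          ≤ 2 * Real.sqrt d * (2 * Real.sqrt d / R) ^ ((1 : ℝ) - 1 / 2 ^ (d - 1)) := by
  classical
  -- ## Basic real estimates
  set sd : ℝ := Real.sqrt d with hsd_def
  have hd2 : (2:ℝ) ≤ (d:ℝ) := by exact_mod_cast hd
  have hd0R : (0:ℝ) < d := by linarith
  have hsd0 : 0 < sd := Real.sqrt_pos.2 hd0R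
  have hsd_sq : sd ^ 2 = d := Real.sq_sqrt (le_of_lt hd0R)
  have hsd1 : 1 ≤ sd := Real.one_le_sqrt.2 (by linarith)
  have hsd14 : (1.41:ℝ) ≤ sd := by clear * - hsd_sq hsd0 hd2; nlinarith
  have hsd_le_d : sd ≤ d := by clear * - hsd_sq hsd1; nlinarith
  have hR17 : 17 * (d:ℝ) ≤ R := by clear * - hR hd2 hsd1; nlinarith
  have hR50 : (50:ℝ) ≤ R := by clear * - hR hd2 hsd14; nlinarith
  have hR0 : (0:ℝ) < R := by linarith
  clear_value sd
  -- ## choice of coordinate i and sign s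
  have hvsum : ∑ j, (v j) ^ 2 = 1 := by
    have h := PolesCones.norm_sq_eq v
    rw [hv] at h
    simpa using h.symm
  have hd0 : 0 < d := by omega
  haveI : Nonempty (Fin d) := ⟨⟨0, hd0⟩⟩
  obtain ⟨i, hi⟩ : ∃ i : Fin d, 1 / (d:ℝ) ≤ (v i) ^ 2 := by
    by_contra hcon
    push_neg at hcon
    have hlt : ∑ j, (v j) ^ 2 < ∑ _j : Fin d, 1 / (d:ℝ) :=
      Finset.sum_lt_sum_of_nonempty Finset.univ_nonempty (fun j _ => hcon j)
    rw [hvsum, Finset.sum_const, Finset.card_univ, Fintype.card_fin, nsmul_eq_mul,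
      mul_one_div, div_self (ne_of_gt hd0R)] at hlt
    exact lt_irrefl _ hlt
  set s : ℝ := if 0 ≤ v i then 1 else -1 with hs_def
  have hs_cases : s = 1 ∨ s = -1 := by
    by_cases h : 0 ≤ v i <;> simp [hs_def, h]
  have hs_sq : s ^ 2 = 1 := by rcases hs_cases with h | h <;> rw [h] <;> norm_num
  have habsS : |s| = 1 := by rcases hs_cases with h | h <;> rw [h] <;> norm_num
  have hsvi : s * v i = |v i| := by
    by_cases h : 0 ≤ v i
    · rw [abs_of_nonneg h]; simp [hs_def, h]
    · push_neg at h
      rw [abs_of_neg h]; simp [hs_def, not_le.2 h]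
  clear_value s
  have hvi_abs : 1 / sd ≤ |v i| := by
    rw [← Real.sqrt_sq_eq_abs]
    calc 1 / sd = Real.sqrt ((1/sd)^2) := (Real.sqrt_sq (by positivity)).symm
    _ ≤ Real.sqrt ((v i)^2) := by
        apply Real.sqrt_le_sqrt
        rw [div_pow, hsd_sq]
        simpa using hi
  have hvi_le : |v i| ≤ 1 := by
    have h1 : (v i)^2 ≤ 1 := by
      rw [← hvsum]
      exact Finset.single_le_sum (f := fun j => (v j)^2) (fun j _ => sq_nonneg _)
        (Finset.mem_univ i)
    clear * - h1; nlinarith [abs_nonneg (v i), sq_abs (v i)]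
  have hcos : Real.cos (Real.arccos (1/(3*sd))) = 1/(3*sd) := by
    apply Real.cos_arccos
    · have h0 : (0:ℝ) ≤ 1/(3*sd) := by positivity
      linarith
    · rw [div_le_one (by positivity)]; linarith
  -- ## the list of remaining coordinates
  set l : List (Fin d) := (List.finRange d).erase i with hl_def
  have hl_nodup : l.Nodup := (List.nodup_finRange d).erase i
  have hl_len : l.length = d - 1 := by
    rw [hl_def, List.length_erase_of_mem (List.mem_finRange i), List.length_finRange]
  have hl_lenR : (l.length : ℝ) = (d:ℝ) - 1 := by
    rw [hl_len]
    push_cast [Nat.cast_sub (by omega : 1 ≤ d)]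
    ring
  have hmem : ∀ j, j ≠ i → j ∈ l := fun j hj =>
    (List.mem_erase_of_ne hj).2 (List.mem_finRange j)
  have hi_not : i ∉ l := fun h =>
    (((List.nodup_finRange d).mem_erase_iff).1 h).1 rfl
  -- ## key quantities
  set L : ℝ := 1 + (l.length : ℝ) / 4 with hL_def
  have hL1 : (1:ℝ) ≤ L := by
    have h0 : (0:ℝ) ≤ (l.length:ℝ)/4 := by positivity
    rw [hL_def]; linarith
  have hL_le_d : L ≤ (d:ℝ) := by rw [hL_def, hl_lenR]; linarith
  have hLR : L ≤ R / 17 := by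
    have := hR17
    linarith [hL_le_d]
  have hL_quarter : L = ((d:ℝ)+3)/4 := by rw [hL_def, hl_lenR]; ring
  clear_value L
  set M : ℝ := Real.sqrt (R^2 - L) with hM_def
  have hM_le : M ≤ R := by
    rw [hM_def]
    calc Real.sqrt (R^2 - L) ≤ Real.sqrt (R^2) := Real.sqrt_le_sqrt (by linarith)
    _ = R := Real.sqrt_sq hR0.le
  have hM_ge : R - 1 ≤ M := by
    rw [hM_def]
    calc R - 1 = Real.sqrt ((R-1)^2) := (Real.sqrt_sq (by linarith)).symm
    _ ≤ Real.sqrt (R^2 - L) := Real.sqrt_le_sqrt (by clear * - hLR hR50 hR0 hL1; nlinarith)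
  have hM_sq : M^2 = R^2 - L := Real.sq_sqrt (by clear * - hLR hR50 hR0; nlinarith)
  clear_value M
  set u : ℝ := (⌊s * y i + M⌋ : ℝ) - s * y i with hu_def
  have hu_le : u ≤ M := by
    have := Int.floor_le (s * y i + M)
    rw [hu_def]; linarith
  have hu_gt : M - 1 < u := by
    have := Int.lt_floor_add_one (s * y i + M)
    rw [hu_def]; linarith
  have hu0 : 0 ≤ u := by linarith
  clear_value u
  set t₁ : ℝ := R^2 - u^2 with ht1_def
  have ht1_ge : L ≤ t₁ := by clear * - ht1_def hu_le hu0 hM_sq; nlinarith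
  have ht1_le : t₁ ≤ L + 2*R - 1 := by
    clear * - ht1_def hu_gt hu0 hM_sq hM_le hM_ge hR50; nlinarith
  clear_value t₁
  -- ## the greedy integer point
  obtain ⟨P1, P2, P3, P4⟩ := PolesCones.greedy_spec (fun j => y j) L hL1 l hl_nodup t₁
    (by rw [← hL_def]; exact ht1_ge) (by rw [← hL_def])
  set g0 : Fin d → ℝ := PolesCones.greedy (fun j => y j) L l t₁ with hg0_def
  set S : ℝ := ∑ j, g0 j ^ 2 with hS_def
  set ε : ℝ := t₁ - S with hε_def
  clear_value ε
  have hε1 : 1 ≤ ε := P3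
  have hS0 : 0 ≤ S := Finset.sum_nonneg fun j _ => sq_nonneg _
  have hS_le : S ≤ L + 2*R - 2 := by
    have h := hε_def
    linarith [hε1, ht1_le]
  clear_value S
  -- exponent γ
  set γ : ℝ := ((2:ℝ)^(d-1))⁻¹ with hγ_def
  have h2pow_pos : (0:ℝ) < (2:ℝ)^(d-1) := by positivity
  have hγ0 : 0 < γ := by rw [hγ_def]; positivity
  have hγ_le : γ ≤ 1/2 := by
    rw [hγ_def]
    have h1 : (2:ℝ)^(1:ℕ) ≤ (2:ℝ)^(d-1) := pow_le_pow_right₀ (by norm_num) (by omega)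
    rw [pow_one] at h1
    rw [inv_le_comm₀ (by positivity) (by norm_num)]
    simpa [one_div] using h1
  clear_value γ
  have hRγ1 : 1 ≤ R ^ γ := Real.one_le_rpow (by linarith) hγ0.le
  have hsqrtR7 : 7 ≤ Real.sqrt R := by
    rw [show (7:ℝ) = Real.sqrt 49 by rw [show (49:ℝ) = 7^2 by norm_num, Real.sqrt_sq] ; norm_num]
    exact Real.sqrt_le_sqrt (by linarith)
  have hsqrtR_sq : Real.sqrt R ^ 2 = R := Real.sq_sqrt hR0.le
  have hsqrtR_le : Real.sqrt R ≤ R / 7 := by clear * - hsqrtR7 hsqrtR_sq; nlinarith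
  have hRγ_le : R ^ γ ≤ Real.sqrt R := by
    rw [Real.sqrt_eq_rpow]
    exact Real.rpow_le_rpow_of_exponent_le (by linarith) (by linarith)
  have hεub : ε ≤ L + 4 * R ^ γ := by
    rcases le_max_iff.1 P4 with h | h
    · linarith
    · have h1 : PolesCones.ub l.length (t₁ - L) ≤ PolesCones.ub l.length (4*(R/2)) :=
        PolesCones.ub_mono _ _ _ (by linarith)
      have h2 : PolesCones.ub l.length (4*(R/2)) ≤ 4*(R/2) ^ (((2:ℝ)^l.length)⁻¹) :=
        PolesCones.ub_le _ _ (by linarith)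
      have h3 : (R/2) ^ (((2:ℝ)^l.length)⁻¹) ≤ R ^ γ := by
        rw [hγ_def, hl_len]
        exact Real.rpow_le_rpow (by linarith) (by linarith) (by positivity)
      linarith
  have hεR : ε ≤ R := by linarith
  -- ## definition of the lattice point a
  have hg0i : g0 i = 0 := P1 i hi_not
  set G : Fin d → ℝ := Function.update g0 i (s*u) with hG_def
  set a : EuclideanSpace ℝ (Fin d) := WithLp.toLp 2 (fun j => y j + G j) with ha_def
  have ha_sub : ∀ j, (a - y) j = G j := fun j => by
    simp [ha_def, PiLp.sub_apply]
  have hsumG_sq : ∑ j, (G j)^2 = (s*u)^2 + S := by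
    rw [hG_def, hS_def]
    exact PolesCones.sum_update g0 i (s*u) (fun _ x => x^2) (by rw [hg0i]; ring)
  have hsu_sq : (s*u)^2 = u^2 := by rw [mul_pow, hs_sq, one_mul]
  have hNsq : ‖a - y‖^2 = R^2 - ε := by
    rw [PolesCones.norm_sq_eq]
    rw [Finset.sum_congr rfl (fun j _ => by rw [ha_sub])]
    rw [hsumG_sq, hsu_sq, hε_def, ht1_def]
    ring
  have hN_le : ‖a - y‖ ≤ R := by
    clear * - hNsq hε1 hR0; nlinarith [norm_nonneg (a - y)]
  have hN_pos : 0 < ‖a - y‖ := by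
    clear * - hNsq hεR hR50; nlinarith [norm_nonneg (a - y)]
  -- ## the pole
  have hb_sub : (y + (s*R) • EuclideanSpace.single i (1:ℝ)) - y
      = (s*R) • EuclideanSpace.single i (1:ℝ) := add_sub_cancel_left y _
  have hnorm_b : ‖(s*R) • (EuclideanSpace.single i (1:ℝ))‖ = R := by
    rw [norm_smul, EuclideanSpace.norm_single]
    simp [Real.norm_eq_abs, abs_mul, habsS, abs_of_pos hR0]
  have hinner_b : (inner ℝ ((s*R) • EuclideanSpace.single i (1:ℝ)) v : ℝ) = s*R*(v i) := by
    rw [real_inner_smul_left, EuclideanSpace.inner_single_left]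
    simp
  refine ⟨i, s, hs_cases, ?_, ?_⟩
  · -- pole is in the cone
    show ‖_ - y‖ * Real.cos _ ≤ (inner ℝ (_ - y) v : ℝ)
    rw [hb_sub, hcos, hnorm_b, hinner_b]
    have h1 : s*R*(v i) = R * (s * v i) := by ring
    rw [h1, hsvi]
    have h2 : 1/(3*sd) ≤ |v i| := by
      refine le_trans ?_ hvi_abs
      rw [div_le_div_iff₀ (by positivity) hsd0]
      linarith
    exact mul_le_mul_of_nonneg_left h2 hR0.le
  -- the lattice point
  refine ⟨a, ?_, ?_, hN_le, ?_, ?_⟩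
  · -- a ∈ intLattice d
    intro j
    by_cases hji : j = i
    · subst hji
      show ∃ n : ℤ, y j + G j = (n:ℝ)
      rw [hG_def, Function.update_self, hu_def]
      rcases hs_cases with h | h <;> rw [h]
      · exact ⟨⌊1 * y j + M⌋, by push_cast; ring⟩
      · exact ⟨-⌊(-1) * y j + M⌋, by push_cast; ring⟩
    · show ∃ n : ℤ, y j + G j = (n:ℝ)
      rw [hG_def, Function.update_of_ne hji]
      exact P2 j (hmem j hji)
  · -- a is in the cone
    show ‖a - y‖ * Real.cos _ ≤ (inner ℝ (a - y) v : ℝ)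
    rw [hcos]
    have hinner_a : (inner ℝ (a - y) v : ℝ) = (s*u)*(v i) + ∑ j, g0 j * v j := by
      rw [PolesCones.inner_eq]
      rw [Finset.sum_congr rfl (fun j _ => by rw [ha_sub])]
      rw [hG_def]
      exact PolesCones.sum_update g0 i (s*u) (fun j x => x * v j) (by rw [hg0i]; ring)
    set W : ℝ := Real.sqrt (L + 2*R) with hW_def
    have hW0 : 0 ≤ W := by rw [hW_def]; exact Real.sqrt_nonneg _
    have hW_sq : W^2 = L + 2*R := by rw [hW_def]; exact Real.sq_sqrt (by linarith)
    clear_value W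
    have hT : -W ≤ ∑ j, g0 j * v j := by
      have hcs : (∑ j, g0 j * v j)^2 ≤ S * 1 := by
        have h := Finset.sum_mul_sq_le_sq_mul_sq Finset.univ g0 (fun j => v j)
        rw [← hS_def] at h
        rw [hvsum] at h
        exact h
      have habs2 : |∑ j, g0 j * v j| ≤ W := by
        rw [hW_def]
        apply Real.abs_le_sqrt
        clear * - hcs hS_le; nlinarith
      linarith [neg_abs_le (∑ j, g0 j * v j)]
    have hsdW : sd * W ≤ 2*R/3 - 2 := by
      have h1 : Real.sqrt ((d:ℝ) * (L + 2*R)) ≤ 2*R/3 - 2 := by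
        calc Real.sqrt ((d:ℝ) * (L + 2*R)) ≤ Real.sqrt ((2*R/3 - 2)^2) := by
              apply Real.sqrt_le_sqrt
              clear * - hd2 hR17 hR50 hL_le_d hL1 hR0
              nlinarith [mul_nonneg (sub_nonneg.2 hR17) hR0.le,
                mul_nonneg (sub_nonneg.2 hR17) (by linarith : (0:ℝ) ≤ (d:ℝ)),
                mul_nonneg hR0.le (by linarith : (0:ℝ) ≤ (d:ℝ) - 2)]
        _ = 2*R/3 - 2 := Real.sqrt_sq (by linarith)
      rw [Real.sqrt_mul hd0R.le, ← hsd_def, ← hW_def] at h1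
      exact h1
    have hq1 : 1 ≤ |v i| * sd := by
      rw [div_le_iff₀ hsd0] at hvi_abs
      linarith
    rw [hinner_a]
    have h1 : (s*u)*(v i) = u * (s * v i) := by ring
    rw [h1, hsvi]
    have hgoal2 : ‖a - y‖ * (1/(3*sd)) ≤ u * |v i| - W := by
      rw [mul_one_div, div_le_iff₀ (by positivity : (0:ℝ) < 3*sd)]
      have hx1 : 0 ≤ u * (|v i| * sd - 1) := mul_nonneg hu0 (by linarith)
      clear * - hx1 hsdW hu_gt hM_ge hN_le hW0 hR50 hR0
      nlinarith
    linarith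
  · -- distance from a to the pole
    have hab : ∀ j, (a - (y + (s*R) • EuclideanSpace.single i (1:ℝ))) j
        = Function.update g0 i (s*(u - R)) j := by
      intro j
      by_cases hji : j = i
      · subst hji
        simp only [PiLp.sub_apply, PiLp.add_apply, PiLp.smul_apply,
          EuclideanSpace.single_apply, if_pos rfl, ha_def, hG_def,
          Function.update_self, smul_eq_mul, mul_one]
        simp
        ring
      · simp only [PiLp.sub_apply, PiLp.add_apply, PiLp.smul_apply,
          EuclideanSpace.single_apply, if_neg hji, ha_def, hG_def,
          Function.update_of_ne hji, smul_eq_mul, mul_zero]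
        ring
    have hab_sq : ‖a - (y + (s*R) • EuclideanSpace.single i (1:ℝ))‖^2 = (u - R)^2 + S := by
      rw [PolesCones.norm_sq_eq]
      rw [Finset.sum_congr rfl (fun j _ => by rw [hab])]
      rw [PolesCones.sum_update g0 i (s*(u-R)) (fun _ x => x^2) (by rw [hg0i]; ring)]
      rw [hS_def, mul_pow, hs_sq, one_mul]
    have hbound : (u - R)^2 + S ≤ 2*sd*R := by
      clear * - hu_le hu_gt hM_le hM_ge hS_le hsd14 hR50 hLR hR0
      nlinarith [mul_nonneg (by linarith : (0:ℝ) ≤ R - u) (by linarith : (0:ℝ) ≤ 2 - (R - u)),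
        mul_nonneg (by linarith : (0:ℝ) ≤ sd - 1.41) hR0.le]
    rw [← Real.sqrt_sq (norm_nonneg (a - (y + (s*R) • EuclideanSpace.single i (1:ℝ))))]
    apply Real.sqrt_le_sqrt
    rw [hab_sq]
    exact hbound
  · -- distance to the sphere
    set N : ℝ := ‖a - y‖ with hN_def
    clear_value N
    set p : EuclideanSpace ℝ (Fin d) := y + (R/N) • (a - y) with hp_def
    have hp_mem : p ∈ Metric.sphere y R := by
      show dist p y = R
      rw [dist_eq_norm, hp_def, add_sub_cancel_left, norm_smul]
      rw [Real.norm_eq_abs, abs_of_pos (div_pos hR0 hN_pos), ← hN_def]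
      field_simp [hN_pos.ne']
    have hdist : dist a p = R - N := by
      rw [dist_eq_norm]
      have h1 : a - p = (1 - R/N) • (a - y) := by
        rw [hp_def, sub_smul, one_smul]
        abel
      rw [h1, norm_smul, Real.norm_eq_abs, ← hN_def]
      have h2 : R/N ≥ 1 := by
        rw [ge_iff_le, le_div_iff₀ hN_pos]
        linarith [hN_le]
      rw [abs_of_nonpos (by linarith : 1 - R/N ≤ 0)]
      field_simp [hN_pos.ne']
      ring
    have h3 : Metric.infDist a (Metric.sphere y R) ≤ R - N :=
      hdist ▸ Metric.infDist_le_dist_of_mem hp_mem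
    have h4 : R - N ≤ ε / R := by
      rw [le_div_iff₀ hR0]
      clear * - hNsq hN_le hN_pos; nlinarith
    -- final rpow arithmetic
    set c : ℝ := 2 * sd with hc_def
    have hc0 : (0:ℝ) < c := by rw [hc_def]; positivity
    clear_value c
    set e : ℝ := (1:ℝ) - 1/2^(d-1) with he_def
    clear_value e
    have he_γ : e = 1 - γ := by rw [he_def, hγ_def, one_div]
    have hrw : c * (c/R) ^ e * R = (c^2 / c^γ) * R^γ := by
      rw [Real.div_rpow hc0.le hR0.le]
      have h5 : c * (c^e/R^e) * R = (c * c^e) * (R / R^e) := by ring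
      rw [h5]
      have h6 : c * c^e = c^2 / c^γ := by
        rw [show c * c^e = c^(1:ℝ) * c^e by rw [Real.rpow_one]]
        rw [← Real.rpow_add hc0]
        rw [show (1:ℝ) + e = 2 - γ by rw [he_γ]; ring]
        rw [Real.rpow_sub hc0]
        norm_num [Real.rpow_two]
      have h7 : R / R^e = R^γ := by
        rw [show R / R^e = R^(1:ℝ) / R^e by rw [Real.rpow_one]]
        rw [← Real.rpow_sub hR0]
        rw [show (1:ℝ) - e = γ by rw [he_γ]; ring]
      rw [h6, h7]
    have hcγ_pos : 0 < c^γ := Real.rpow_pos_of_pos hc0 γ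
    have hc_sq : c^2 = 4*(d:ℝ) := by rw [hc_def]; clear * - hsd_sq; nlinarith
    have hkey : ε ≤ (c^2 / c^γ) * R^γ := by
      rcases eq_or_lt_of_le hd with hd3 | hd3
      · -- d = 2
        have hd2' : d = 2 := hd3.symm
        subst hd2'
        have hγ_val : γ = 1/2 := by rw [hγ_def]; norm_num
        have hsd_sq2 : sd^2 = 2 := by rw [hsd_sq]; norm_num
        have hsd_le' : sd ≤ 1.415 := by clear * - hsd_sq2 hsd0; nlinarith
        have hcsq : (c^γ)*(c^γ) = c := by
          rw [← Real.rpow_add hc0, show γ + γ = 1 by rw [hγ_val]; norm_num]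
          exact Real.rpow_one c
        have hcγ_le : c^γ ≤ 17/10 := by
          clear * - hcγ_pos hcsq hc_def hsd_le'; nlinarith [hcγ_pos.le]
        have hRγ7 : 7 ≤ R^γ := by
          have h12 : R^γ = Real.sqrt R := by
            rw [Real.sqrt_eq_rpow, hγ_val]
          rw [h12]; exact hsqrtR7
        have hL_val : L = 5/4 := by
          rw [hL_def, hl_lenR]; norm_num
        have hc_sq2 : c^2 = 8 := by rw [hc_sq]; norm_num
        have h9 : (80:ℝ)/17 ≤ c^2/c^γ := by
          rw [hc_sq2]
          calc (80:ℝ)/17 = 8/(17/10) := by norm_num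
          _ ≤ 8/c^γ := div_le_div_of_nonneg_left (by norm_num) hcγ_pos hcγ_le
        have h8 : L + 4*R^γ ≤ (c^2/c^γ) * R^γ := by
          have h10 : (80/17 - 4) * 7 ≤ (80/17-4) * R^γ := by
            clear * - hRγ7; nlinarith
          have hL_val' : L = 5/4 := hL_val
          clear * - h9 h10 hRγ7 hL_val'
          nlinarith [mul_nonneg (sub_nonneg.2 h9) (by linarith : (0:ℝ) ≤ R^γ)]
        linarith
      · -- d ≥ 3
        have hd3' : (3:ℝ) ≤ (d:ℝ) := by exact_mod_cast hd3
        have hd_le : d ≤ 2^(d-1) := by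
          have h1 := PolesCones.two_mul_le_two_pow d (by omega)
          have h2 : 2^d = 2*2^(d-1) := by
            rw [← pow_succ']
            congr 1
            omega
          omega
        have hnat : 2*d ≤ 2^(2^(d-1)) := by
          calc 2*d ≤ 2^d := PolesCones.two_mul_le_two_pow d (by omega)
          _ ≤ 2^(2^(d-1)) := Nat.pow_le_pow_right (by norm_num) hd_le
        have hc_le : c ≤ (2:ℝ)^((2:ℕ)^(d-1)) := by
          rw [hc_def]
          calc 2*sd ≤ 2*(d:ℝ) := by linarith
          _ ≤ (2:ℝ)^((2:ℕ)^(d-1)) := by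
              have : ((2*d : ℕ) : ℝ) ≤ ((2^(2^(d-1)) : ℕ) : ℝ) := by exact_mod_cast hnat
              push_cast at this
              linarith
        have hcγ_le : c^γ ≤ 2 := by
          calc c^γ ≤ ((2:ℝ)^((2:ℕ)^(d-1)))^γ := Real.rpow_le_rpow hc0.le hc_le hγ0.le
          _ = 2 := by
              rw [← Real.rpow_natCast 2 (2^(d-1)), ← Real.rpow_mul (by norm_num : (0:ℝ) ≤ 2)]
              rw [hγ_def]
              push_cast
              rw [mul_inv_cancel₀ (by positivity)]
              exact Real.rpow_one 2
        have h8 : L + 4*R^γ ≤ (c^2/c^γ) * R^γ := by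
          have h9 : 2*(d:ℝ) ≤ c^2/c^γ := by
            rw [hc_sq]
            calc 2*(d:ℝ) = 4*(d:ℝ)/2 := by ring
            _ ≤ 4*(d:ℝ)/c^γ := div_le_div_of_nonneg_left (by positivity) hcγ_pos hcγ_le
          have h10 : L + 4*R^γ ≤ 2*(d:ℝ)*R^γ := by
            have h11 : (2*(d:ℝ) - 4) * 1 ≤ (2*(d:ℝ) - 4) * R^γ := by
              clear * - hRγ1 hd3'
              nlinarith [mul_nonneg (by linarith : (0:ℝ) ≤ 2*(d:ℝ)-4)
                (by linarith : (0:ℝ) ≤ R^γ - 1)]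
            clear * - h11 hL_quarter hd3' hRγ1
            nlinarith
          have hRγ0 : (0:ℝ) < R^γ := Real.rpow_pos_of_pos hR0 γ
          clear * - h9 h10 hRγ0
          nlinarith [mul_nonneg (sub_nonneg.2 h9) hRγ0.le]
        linarith
    calc Metric.infDist a (Metric.sphere y R) ≤ R - N := h3
    _ ≤ ε / R := h4
    _ ≤ c * (c/R) ^ e := by
        rw [div_le_iff₀ hR0, hrw]
        exact hkey
end
end

section
/- Let d ≥ 1 and let 0 < τ < 1/2. Then there exists an injective map φ: ℤ^d → ℝ^d with φ(0) = 0 and ‖a − φ(a)‖ ≤ τ for all a ∈ ℤ^d, such that for every integer k ≥ 1 there exists a point b ∈ φ(ℤ^d) for which the k-th Brillouin zone Bz_k(b, φ(ℤ^d)) has a chamber of diameter at least τ and of d-dimensional Lebesgue measure at least ν_d·(τ/2)^d. -/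
open Set Metric MeasureTheory

noncomputable section

namespace SPIL

open Polynomial

/-- Abbreviation for the canonical embedding (same as `toEuc`). -/
def toEuc' (d : ℕ) (a : Fin d → ℤ) : EuclideanSpace ℝ (Fin d) :=
  WithLp.toLp 2 (fun i => (a i : ℝ))

lemma toEuc'_eq (d : ℕ) : toEuc d = toEuc' d := rfl

lemma toEuc'_inj (d : ℕ) : Function.Injective (toEuc' d) := by
  intro a b h
  funext i
  have h2 : ((a i : ℝ)) = ((b i : ℝ)) := congrArg (fun v : EuclideanSpace ℝ (Fin d) => v i) h
  exact_mod_cast h2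

lemma theta_combo {d : ℕ} (θ : ℝ) (hθ : Transcendental ℤ θ)
    (m : Fin d → ℤ) (q : ℚ) (h : ∑ i : Fin d, (m i : ℝ) * θ ^ ((i : ℕ) + 1) = (q : ℝ)) :
    m = 0 := by
  by_contra hm
  obtain ⟨j, hj⟩ : ∃ j, m j ≠ 0 := by
    by_contra h'
    push_neg at h'
    exact hm (funext h')
  apply hθ
  refine ⟨(∑ i : Fin d, Polynomial.monomial ((i:ℕ)+1) ((q.den : ℤ) * m i))
      - Polynomial.monomial 0 q.num, ?_, ?_⟩
  · intro hp0
    have hc : ((∑ i : Fin d, Polynomial.monomial ((i:ℕ)+1) ((q.den : ℤ) * m i))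
        - Polynomial.monomial 0 q.num).coeff ((j:ℕ)+1) = (q.den : ℤ) * m j := by
      rw [Polynomial.coeff_sub, Polynomial.finset_sum_coeff]
      rw [Finset.sum_eq_single j]
      · rw [Polynomial.coeff_monomial, Polynomial.coeff_monomial]
        simp
      · intro i _ hij
        rw [Polynomial.coeff_monomial]
        have h2 : ¬((i:ℕ)+1 = (j:ℕ)+1) := by
          simpa [Fin.val_eq_val] using hij
        simp only [h2, if_false]
      · simp
    rw [hp0] at hc
    simp only [Polynomial.coeff_zero] at hc
    rcases mul_eq_zero.mp hc.symm with h1 | h2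
    · exact q.den_pos.ne' (by exact_mod_cast h1)
    · exact hj h2
  · have heval : (Polynomial.aeval θ) ((∑ i : Fin d, Polynomial.monomial ((i:ℕ)+1) ((q.den : ℤ) * m i)) - Polynomial.monomial 0 q.num)
        = (q.den : ℝ) * (∑ i : Fin d, (m i : ℝ) * θ ^ ((i : ℕ) + 1)) - (q.num : ℝ) := by
      rw [map_sub, map_sum, Finset.mul_sum]
      congr 1
      · refine Finset.sum_congr rfl fun i _ => ?_
        rw [Polynomial.aeval_monomial]
        simp only [eq_intCast]
        push_cast
        ring
      · rw [Polynomial.aeval_monomial]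
        simp [eq_intCast]
    rw [heval, h]
    have hden : (q.den : ℝ) * (q : ℝ) = (q.num : ℝ) := by
      rw [Rat.cast_def]
      field_simp
    rw [hden, sub_self]

lemma dist_inj {d n : ℕ} (hn : n ≠ 0) (θ : ℝ) (hθ : Transcendental ℤ θ)
    (z : EuclideanSpace ℝ (Fin d)) (hz : ∀ i, z i = 1/2 + (1/n) * θ^((i:ℕ)+1))
    {a b : Fin d → ℤ} (h : dist (toEuc' d a) z = dist (toEuc' d b) z) : a = b := by
  have hsq : ∑ i, ((a i : ℝ) - z i)^2 = ∑ i, ((b i : ℝ) - z i)^2 := by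
    have h2 := congrArg (· ^ 2) h
    simp only [EuclideanSpace.dist_eq] at h2
    rw [Real.sq_sqrt (by positivity), Real.sq_sqrt (by positivity)] at h2
    simpa [Real.dist_eq, sq_abs, toEuc'] using h2
  have hC : ∑ i, (((a i:ℝ) - z i)^2 - ((b i:ℝ) - z i)^2) = 0 := by
    rw [Finset.sum_sub_distrib, hsq, sub_self]
  have hkey : ∑ i, ( (((a i:ℝ)^2 - (b i:ℝ)^2 - ((a i:ℝ)-(b i:ℝ)))) - (2/(n:ℝ)) * (((a i:ℝ)-(b i:ℝ)) * θ^((i:ℕ)+1)) ) = 0 := by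
    rw [← hC]
    refine Finset.sum_congr rfl fun i _ => ?_
    rw [hz i]
    have hn' : (n:ℝ) ≠ 0 := Nat.cast_ne_zero.mpr hn
    field_simp
    ring
  rw [Finset.sum_sub_distrib, ← Finset.mul_sum, sub_eq_zero] at hkey
  have hn' : (n:ℝ) ≠ 0 := Nat.cast_ne_zero.mpr hn
  have hS : ∑ i, (((a - b) i : ℤ) : ℝ) * θ^((i:ℕ)+1)
      = ((((n : ℚ) * (∑ i, ((a i)^2 - (b i)^2 - (a i - b i) : ℤ) : ℤ)) / 2 : ℚ) : ℝ) := by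
    have h2 : (2/(n:ℝ)) ≠ 0 := by positivity
    have := hkey.symm
    field_simp at this ⊢
    push_cast [Pi.sub_apply]
    linarith [this]
  have hab := theta_combo θ hθ (a - b) _ hS
  funext i
  have h0 := congrFun hab i
  simpa [Pi.sub_apply, Pi.zero_apply, sub_eq_zero] using h0

lemma coord_abs_le {d : ℕ} (x : EuclideanSpace ℝ (Fin d)) (i : Fin d) : |x i| ≤ ‖x‖ := by
  rw [EuclideanSpace.norm_eq, ← Real.sqrt_sq_eq_abs]
  apply Real.sqrt_le_sqrt
  have : x i ^ 2 ≤ ∑ j, x j ^ 2 :=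
    Finset.single_le_sum (fun j _ => sq_nonneg (x j)) (Finset.mem_univ i)
  simpa [sq_abs] using this

lemma coord_dist_le {d : ℕ} (x y : EuclideanSpace ℝ (Fin d)) (i : Fin d) :
    |x i - y i| ≤ dist x y := by
  rw [dist_eq_norm]
  exact coord_abs_le (x - y) i

lemma lattice_finite (d : ℕ) (z : EuclideanSpace ℝ (Fin d)) (R : ℝ) :
    {a : Fin d → ℤ | dist (toEuc' d a) z ≤ R}.Finite := by
  obtain ⟨M, hM⟩ := exists_nat_gt (R + ‖z‖)
  apply Set.Finite.subset (Set.Finite.pi (fun i : Fin d => Set.finite_Icc (-(M:ℤ)) M))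
  intro a ha
  simp only [Set.mem_pi, Set.mem_univ, Set.mem_Icc, forall_true_left]
  intro i
  have h1 := coord_dist_le (toEuc' d a) z i
  change |(a i : ℝ) - z i| ≤ dist (toEuc' d a) z at h1
  have h2 : |(a i : ℝ)| ≤ R + ‖z‖ := by
    have hz := coord_abs_le z i
    have hin := ha.out
    calc |(a i : ℝ)| ≤ |(a i : ℝ) - z i| + |z i| := by
          have := abs_sub_abs_le_abs_sub ((a i : ℝ)) (z i); linarith [abs_abs (z i)]
      _ ≤ R + ‖z‖ := by linarith
  have h3 : |(a i : ℝ)| ≤ (M : ℝ) := le_of_lt (lt_of_le_of_lt h2 hM)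
  rw [← Int.cast_abs] at h3
  have h4 : |a i| ≤ (M : ℤ) := by exact_mod_cast h3
  constructor <;> [linarith [neg_abs_le (a i)]; linarith [le_abs_self (a i)]]

lemma lattice_sep {d : ℕ} {a b : Fin d → ℤ} (h : a ≠ b) :
    1 ≤ dist (toEuc' d a) (toEuc' d b) := by
  obtain ⟨i, hi⟩ : ∃ i, a i ≠ b i := by
    by_contra h'
    push_neg at h'
    exact h (funext h')
  have h1 : (1 : ℝ) ≤ |(a i : ℝ) - (b i : ℝ)| := by
    have h0 : (1 : ℤ) ≤ |a i - b i| := Int.one_le_abs (sub_ne_zero.mpr hi)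
    calc (1:ℝ) ≤ ((|a i - b i| : ℤ) : ℝ) := by exact_mod_cast h0
      _ = |(a i : ℝ) - (b i : ℝ)| := by push_cast; ring_nf
  calc (1:ℝ) ≤ |(a i : ℝ) - (b i : ℝ)| := h1
    _ = |(toEuc' d a - toEuc' d b) i| := by simp [toEuc']
    _ ≤ ‖toEuc' d a - toEuc' d b‖ := coord_abs_le _ i
    _ = dist (toEuc' d a) (toEuc' d b) := (dist_eq_norm _ _).symm

lemma toEuc'_sub_single {d : ℕ} (i₀ : Fin d) (a : Fin d → ℤ) (t : ℤ) :
    toEuc' d (a - t • Pi.single i₀ 1)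
      = toEuc' d a - (t : ℝ) • EuclideanSpace.single i₀ (1:ℝ) := by
  ext i
  simp only [toEuc', PiLp.toLp_apply, PiLp.sub_apply, PiLp.smul_apply, EuclideanSpace.single_apply,
    Pi.sub_apply, Pi.smul_apply, Pi.single_apply, smul_eq_mul]
  push_cast
  split_ifs <;> simp

lemma dist_translate {d : ℕ} (x z v : EuclideanSpace ℝ (Fin d)) :
    dist x (z + v) = dist (x - v) z := by
  rw [dist_eq_norm, dist_eq_norm]
  congr 1
  abel

lemma dist_scale {d : ℕ} (w x : EuclideanSpace ℝ (Fin d)) (s : ℝ) (hs : 0 ≤ s) :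
    dist (w + s • (x - w)) w = s * dist x w := by
  rw [dist_eq_norm, dist_eq_norm, add_sub_cancel_left, norm_smul,
    Real.norm_eq_abs, abs_of_nonneg hs]

lemma dist_scale_self {d : ℕ} (w x : EuclideanSpace ℝ (Fin d)) (s : ℝ) :
    dist x (w + s • (x - w)) = |1 - s| * dist x w := by
  rw [dist_eq_norm, dist_eq_norm]
  have h : x - (w + s • (x - w)) = (1 - s) • (x - w) := by
    rw [sub_smul, one_smul]
    abel
  rw [h, norm_smul, Real.norm_eq_abs]

lemma exists_min_on' {d : ℕ} (z : EuclideanSpace ℝ (Fin d)) (S : Set (Fin d → ℤ))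
    (hS : S.Nonempty) :
    ∃ b ∈ S, ∀ a ∈ S, dist (toEuc' d b) z ≤ dist (toEuc' d a) z := by
  obtain ⟨a₀, ha₀⟩ := hS
  set T := {a ∈ S | dist (toEuc' d a) z ≤ dist (toEuc' d a₀) z} with hT
  have hTfin : T.Finite := (lattice_finite d z (dist (toEuc' d a₀) z)).subset (fun a ha => ha.2)
  have hTne : T.Nonempty := ⟨a₀, ha₀, le_refl _⟩
  obtain ⟨b, hbT, hb⟩ := Set.exists_min_image T (fun a => dist (toEuc' d a) z) hTfin hTne
  refine ⟨b, hbT.1, fun a ha => ?_⟩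
  by_cases h : dist (toEuc' d a) z ≤ dist (toEuc' d a₀) z
  · exact hb a ⟨ha, h⟩
  · exact le_trans (hb a₀ ⟨ha₀, le_refl _⟩) (le_of_not_ge h)

lemma exists_kth {d : ℕ} (hd : 1 ≤ d) (z : EuclideanSpace ℝ (Fin d))
    (hinj : ∀ a b : Fin d → ℤ, dist (toEuc' d a) z = dist (toEuc' d b) z → a = b) (j : ℕ) :
    ∃ c : Fin d → ℤ, {a | dist (toEuc' d a) z < dist (toEuc' d c) z}.Finite ∧
      {a | dist (toEuc' d a) z < dist (toEuc' d c) z}.ncard = j := by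
  have hInf : Infinite (Fin d → ℤ) := by
    refine Infinite.of_injective (fun n : ℤ => fun _ => n) ?_
    intro m n h
    exact congrFun h ⟨0, hd⟩
  induction j with
  | zero =>
    obtain ⟨b, -, hb⟩ := exists_min_on' z Set.univ ⟨0, trivial⟩
    have he : {a | dist (toEuc' d a) z < dist (toEuc' d b) z} = ∅ := by
      ext a
      simp only [Set.mem_setOf_eq, Set.mem_empty_iff_false, iff_false, not_lt]
      exact hb a trivial
    exact ⟨b, by rw [he]; exact ⟨Set.finite_empty, Set.ncard_empty _⟩⟩
  | succ j ih =>
    obtain ⟨c, hcfin, hccard⟩ := ih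
    set S := {a : Fin d → ℤ | dist (toEuc' d c) z < dist (toEuc' d a) z} with hSdef
    have hSne : S.Nonempty := by
      by_contra h
      rw [Set.not_nonempty_iff_eq_empty] at h
      have huniv : (Set.univ : Set (Fin d → ℤ)).Finite := by
        apply (lattice_finite d z (dist (toEuc' d c) z)).subset
        intro a _
        simp only [Set.mem_setOf_eq]
        by_contra hlt
        have haS : a ∈ S := by simpa [hSdef] using lt_of_not_ge hlt
        rw [h] at haS
        exact haS
      exact Set.infinite_univ huniv
    obtain ⟨b, hbS, hb⟩ := exists_min_on' z S hSne
    have hset : {a | dist (toEuc' d a) z < dist (toEuc' d b) z}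
        = insert c {a | dist (toEuc' d a) z < dist (toEuc' d c) z} := by
      ext a
      simp only [Set.mem_setOf_eq, Set.mem_insert_iff]
      constructor
      · intro ha
        rcases lt_trichotomy (dist (toEuc' d a) z) (dist (toEuc' d c) z) with h1 | h1 | h1
        · exact Or.inr h1
        · exact Or.inl (hinj a c h1)
        · exact absurd (hb a h1) (not_le.mpr ha)
      · intro ha
        rcases ha with rfl | ha
        · exact hbS
        · exact lt_trans ha hbS
    refine ⟨b, ?_, ?_⟩
    · rw [hset]; exact hcfin.insert c
    · rw [hset, Set.ncard_insert_of_notMem (by simp) hcfin, hccard]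

lemma exists_int_seq (B C : ℕ → ℝ) :
    ∃ N : ℕ → ℤ, ∀ j, (B j < N j) ∧ ((N j : ℝ) + C j < N (j + 1)) := by
  have step : ∀ (j : ℕ) (Nj : ℤ), ∃ N' : ℤ, B (j+1) < N' ∧ (Nj : ℝ) + C j < N' := by
    intro j Nj
    obtain ⟨N', hN'⟩ := exists_int_gt (max (B (j+1)) ((Nj : ℝ) + C j))
    exact ⟨N', (max_lt_iff.mp hN').1, (max_lt_iff.mp hN').2⟩
  choose g hg1 hg2 using step
  obtain ⟨N0, hN0⟩ := exists_int_gt (B 0)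
  refine ⟨fun j => Nat.rec N0 (fun j' Nj => g j' Nj) j, ?_⟩
  intro j
  induction j with
  | zero => exact ⟨hN0, hg2 0 N0⟩
  | succ j ih => exact ⟨hg1 j _, hg2 (j+1) _⟩

lemma z_far {d n : ℕ} (hd : 1 ≤ d) {τ θ : ℝ} (hτ0 : 0 < τ) (hθ0 : 0 < θ)
    (hεθ : (1/(n:ℝ)) * θ < 1/2 - τ)
    (z : EuclideanSpace ℝ (Fin d)) (hz : ∀ i, z i = 1/2 + (1/(n:ℝ)) * θ^((i:ℕ)+1))
    (a : Fin d → ℤ) : τ < dist (toEuc' d a) z := by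
  set i₀ : Fin d := ⟨0, hd⟩ with hi₀
  set cc : ℝ := (1/(n:ℝ)) * θ with hcc
  have hcc0 : 0 ≤ cc := by positivity
  have hzi : z i₀ = 1/2 + cc := by
    rw [hz i₀, hcc]
    norm_num [hi₀]
  have hkey : τ < |(a i₀ : ℝ) - z i₀| := by
    rw [hzi]
    rcases le_or_gt (a i₀) 0 with hm | hm
    · have hm' : (a i₀ : ℝ) ≤ 0 := by exact_mod_cast hm
      rw [abs_of_neg (by linarith)]
      linarith
    · have hm' : (1:ℝ) ≤ (a i₀ : ℝ) := by exact_mod_cast hm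
      rw [abs_of_nonneg (by linarith)]
      linarith
  calc τ < |(a i₀ : ℝ) - z i₀| := hkey
    _ = |(toEuc' d a - z) i₀| := by simp [toEuc']
    _ ≤ ‖toEuc' d a - z‖ := coord_abs_le _ i₀
    _ = dist (toEuc' d a) z := (dist_eq_norm _ _).symm

lemma ofReal_le_diam_ball {d : ℕ} (hd : 1 ≤ d) (x : EuclideanSpace ℝ (Fin d)) {r : ℝ}
    (hr : 0 < r) : ENNReal.ofReal (2 * r) ≤ EMetric.diam (Metric.ball x r) := by
  apply le_of_forall_lt
  intro c hc
  have hc_ne : c ≠ ⊤ := hc.ne_top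
  set s : ℝ := max c.toReal 0 with hs_def
  have hs0 : 0 ≤ s := le_max_right _ _
  have hs : s < 2 * r := by
    rw [hs_def, max_lt_iff]
    constructor
    · have := ENNReal.toReal_strict_mono ENNReal.ofReal_ne_top hc
      rwa [ENNReal.toReal_ofReal (by positivity)] at this
    · positivity
  set e : EuclideanSpace ℝ (Fin d) := EuclideanSpace.single ⟨0, hd⟩ (1:ℝ) with he_def
  have he : ‖e‖ = 1 := by rw [he_def, EuclideanSpace.norm_single, norm_one]
  set t : ℝ := (s + 2*r)/4 with ht_def
  have ht0 : 0 ≤ t := by positivity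
  have htr : t < r := by rw [ht_def]; linarith
  set p := x - t • e with hp_def
  set q := x + t • e with hq_def
  have hpq : dist p q = 2 * t := by
    rw [dist_eq_norm, hp_def, hq_def]
    have h2 : x - t • e - (x + t • e) = (-(2*t)) • e := by
      rw [neg_smul]
      rw [show (2*t) • e = t • e + t • e by rw [two_mul, add_smul]]
      abel
    rw [h2, norm_smul, Real.norm_eq_abs, he, mul_one, abs_neg, abs_of_nonneg (by positivity)]
  have hpmem : p ∈ Metric.ball x r := by
    rw [Metric.mem_ball, hp_def, dist_comm, dist_eq_norm]
    rw [show x - (x - t • e) = t • e by abel]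
    rw [norm_smul, Real.norm_eq_abs, he, mul_one, abs_of_nonneg ht0]
    exact htr
  have hqmem : q ∈ Metric.ball x r := by
    rw [Metric.mem_ball, hq_def, dist_eq_norm]
    rw [show x + t • e - x = t • e by abel]
    rw [norm_smul, Real.norm_eq_abs, he, mul_one, abs_of_nonneg ht0]
    exact htr
  calc c = ENNReal.ofReal c.toReal := (ENNReal.ofReal_toReal hc_ne).symm
    _ ≤ ENNReal.ofReal s := ENNReal.ofReal_le_ofReal (le_max_left _ _)
    _ < ENNReal.ofReal (2 * t) := by
        apply ENNReal.ofReal_lt_ofReal_iff (by positivity) |>.mpr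
        rw [ht_def]; linarith
    _ = edist p q := by rw [edist_dist, hpq]
    _ ≤ EMetric.diam (Metric.ball x r) := EMetric.edist_le_diam_of_mem hpmem hqmem

lemma volume_ball_eq {d : ℕ} (hd : 1 ≤ d) (x : EuclideanSpace ℝ (Fin d)) {r : ℝ} (hr : 0 ≤ r) :
    volume (Metric.ball x r)
      = ENNReal.ofReal ((Real.pi ^ ((d:ℝ)/2) / Real.Gamma ((d:ℝ)/2 + 1)) * r ^ d) := by
  haveI : Nonempty (Fin d) := ⟨⟨0, hd⟩⟩
  rw [EuclideanSpace.volume_ball]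
  have hcard : Fintype.card (Fin d) = d := Fintype.card_fin d
  rw [hcard]
  have hsqrt : Real.sqrt Real.pi ^ d = Real.pi ^ ((d:ℝ)/2) := by
    rw [Real.sqrt_eq_rpow, ← Real.rpow_natCast (Real.pi ^ ((1:ℝ)/2)) d,
      ← Real.rpow_mul Real.pi_pos.le]
    congr 1
    ring
  rw [hsqrt, ← ENNReal.ofReal_pow hr, ← ENNReal.ofReal_mul (by positivity)]
  rw [mul_comm]

end SPIL

set_option maxHeartbeats 1000000 in
open SPIL in
/-- For every `0 < τ < 1/2` there is a perturbation of `ℤ^d` of magnitude at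
most `τ` fixing `0` such that for every `k ≥ 1` some point of the perturbed lattice has a
chamber of its `k`-th Brillouin zone of diameter at least `τ` and Lebesgue measure at least
`ν_d·(τ/2)^d`. -/
theorem size_for_perturbed_integer_lattices (d : ℕ) (hd : 1 ≤ d) (τ : ℝ)
    (hτ0 : 0 < τ) (hτ : τ < 1 / 2) :
    ∃ φ : (Fin d → ℤ) → EuclideanSpace ℝ (Fin d),
      Function.Injective φ ∧ φ 0 = 0 ∧ (∀ a, ‖toEuc d a - φ a‖ ≤ τ) ∧
      ∀ k : ℕ, 1 ≤ k → ∃ b ∈ Set.range φ, ∃ C ∈ chambers d k (Set.range φ) b,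
        ENNReal.ofReal τ ≤ EMetric.diam C ∧
        ENNReal.ofReal (unitBallVol d * (τ / 2) ^ d) ≤ volume C := by
  classical
  set i₀ : Fin d := ⟨0, hd⟩ with hi₀
  set θ : ℝ := liouvilleNumber 3 with hθdef
  have hθ : Transcendental ℤ θ := transcendental_liouvilleNumber (by norm_num)
  have hθ0 : 0 < θ := by
    rw [hθdef, ← LiouvilleNumber.partialSum_add_remainder (by norm_num : (1:ℝ) < 3) 0]
    have h1 : 0 < LiouvilleNumber.partialSum 3 0 := by
      rw [LiouvilleNumber.partialSum]; norm_num
    have h2 := LiouvilleNumber.remainder_pos (by norm_num : (1:ℝ) < 3) 0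
    linarith
  have hhalf : 0 < 1/2 - τ := by linarith
  obtain ⟨n, hn⟩ := exists_nat_gt (max 1 (θ / (1/2 - τ)))
  have hn1 : (1:ℝ) ≤ n := le_of_lt (lt_of_le_of_lt (le_max_left _ _) hn)
  have hn0 : (0:ℝ) < n := by linarith
  have hnne : n ≠ 0 := (Nat.cast_pos.mp hn0).ne'
  have hεθ : (1/(n:ℝ)) * θ < 1/2 - τ := by
    have h1 : θ / (1/2 - τ) < n := lt_of_le_of_lt (le_max_right _ _) hn
    rw [div_lt_iff₀ hhalf] at h1
    calc (1/(n:ℝ)) * θ = θ / n := by ring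
      _ < 1/2 - τ := by rw [div_lt_iff₀ hn0]; nlinarith
  set z : EuclideanSpace ℝ (Fin d) := WithLp.toLp 2 (fun i : Fin d => 1/2 + (1/(n:ℝ)) * θ^((i:ℕ)+1)) with hzdef
  have hz : ∀ i, z i = 1/2 + (1/(n:ℝ)) * θ^((i:ℕ)+1) := fun i => rfl
  have hinjz : ∀ a b : Fin d → ℤ, dist (toEuc' d a) z = dist (toEuc' d b) z → a = b :=
    fun a b h => dist_inj hnne θ hθ z hz h
  have hfar : ∀ a, τ < dist (toEuc' d a) z := z_far hd hτ0 hθ0 hεθ z hz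
  choose c hcfin hccard using exists_kth hd z hinjz
  set R : ℕ → ℝ := fun j => dist (toEuc' d (c j)) z with hRdef
  have hR0 : ∀ j, 0 ≤ R j := fun j => dist_nonneg
  have hRτ : ∀ j, τ < R j := fun j => hfar (c j)
  obtain ⟨N, hN⟩ := exists_int_seq (fun j => ‖z‖ + R j + 1) (fun j => R j + R (j+1) + 4)
  have hNlow : ∀ j, ‖z‖ + R j + 1 < N j := fun j => (hN j).1
  have hNgap : ∀ i j, i < j → (N i : ℝ) + R i + R j + 4 ≤ N j := by
    intro i j hij
    induction j with
    | zero => exact absurd hij (Nat.not_lt_zero i)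
    | succ j ih =>
      rcases Nat.lt_succ_iff_lt_or_eq.mp hij with h1 | h1
      · have hNj := (hN j).2
        have h2 := ih h1
        have h3 := hR0 (j+1)
        have h4 := hR0 j
        linarith
      · subst h1
        have hNj := (hN i).2
        linarith
  set e : EuclideanSpace ℝ (Fin d) := EuclideanSpace.single i₀ (1:ℝ) with hedef
  have henorm : ‖e‖ = 1 := by rw [hedef, EuclideanSpace.norm_single, norm_one]
  set u : Fin d → ℤ := Pi.single i₀ 1 with hudef
  set zz : ℕ → EuclideanSpace ℝ (Fin d) := fun j => z + (N j : ℝ) • e with hzzdef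
  have htr : ∀ (a : Fin d → ℤ) (j : ℕ),
      dist (toEuc' d a) (zz j) = dist (toEuc' d (a - N j • u)) z := by
    intro a j
    simp only [hzzdef]
    rw [dist_translate, hudef, toEuc'_sub_single, hedef]
  have hfar' : ∀ (a : Fin d → ℤ) (j : ℕ), τ < dist (toEuc' d a) (zz j) := by
    intro a j; rw [htr]; exact hfar _
  have hinj' : ∀ (a b : Fin d → ℤ) (j : ℕ),
      dist (toEuc' d a) (zz j) = dist (toEuc' d b) (zz j) → a = b := by
    intro a b j h
    rw [htr, htr] at h
    have h2 := hinjz _ _ h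
    have h3 := congrArg (· + N j • u) h2
    simpa using h3
  have hzz_dist : ∀ i j, dist (zz i) (zz j) = |(N i : ℝ) - (N j : ℝ)| := by
    intro i j
    simp only [hzzdef]
    rw [dist_eq_norm]
    have h2 : z + (N i : ℝ) • e - (z + (N j : ℝ) • e) = ((N i : ℝ) - (N j : ℝ)) • e := by
      rw [sub_smul]; abel
    rw [h2, norm_smul, Real.norm_eq_abs, henorm, mul_one]
  have hNdist : ∀ i j, i ≠ j → R i + R j + 4 ≤ dist (zz i) (zz j) := by
    intro i j hij
    rw [hzz_dist]
    rcases Nat.lt_or_ge i j with h1 | h1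
    · have h2 := hNgap i j h1
      have h3 : (N i : ℝ) - N j ≤ -(R i + R j + 4) := by linarith
      calc R i + R j + 4 ≤ -((N i : ℝ) - N j) := by linarith
        _ ≤ |(N i : ℝ) - N j| := neg_le_abs _
    · have h1' : j < i := lt_of_le_of_ne h1 (Ne.symm hij)
      have h2 := hNgap j i h1'
      calc R i + R j + 4 ≤ (N i : ℝ) - N j := by linarith
        _ ≤ |(N i : ℝ) - N j| := le_abs_self _
  -- the regions
  set Rgn : ℕ → (Fin d → ℤ) → Prop := fun j a => dist (toEuc' d a) (zz j) ≤ R j + τ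
    with hRgndef
  have hRgn_unique : ∀ a i j, Rgn i a → Rgn j a → i = j := by
    intro a i j hi hj
    by_contra hne
    have h1 := hNdist i j hne
    have h2 := dist_triangle (zz i) (toEuc' d a) (zz j)
    simp only [hRgndef] at hi hj
    rw [dist_comm (zz i) (toEuc' d a)] at h2
    have := hR0 i; have := hR0 j
    linarith
  -- the perturbation map
  set lmap : ℕ → (Fin d → ℤ) → EuclideanSpace ℝ (Fin d) := fun j a =>
    if dist (toEuc' d a) (zz j) < R j then
      zz j + ((dist (toEuc' d a) (zz j) - τ)/(dist (toEuc' d a) (zz j))) • (toEuc' d a - zz j)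
    else if dist (toEuc' d a) (zz j) = R j then toEuc' d a
    else zz j + ((R j + τ)/(dist (toEuc' d a) (zz j))) • (toEuc' d a - zz j)
    with hlmapdef
  set φ : (Fin d → ℤ) → EuclideanSpace ℝ (Fin d) := fun a =>
    if h : ∃ j, Rgn j a then lmap h.choose a else toEuc' d a with hφdef
  have hφ_reg : ∀ j a, Rgn j a → φ a = lmap j a := by
    intro j a hja
    have hex : ∃ j', Rgn j' a := ⟨j, hja⟩
    simp only [hφdef, dif_pos hex]
    rw [hRgn_unique a hex.choose j hex.choose_spec hja]
  have hφ_nreg : ∀ a, (¬ ∃ j, Rgn j a) → φ a = toEuc' d a := by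
    intro a h
    simp only [hφdef, dif_neg h]
  -- branch computations
  have hinner : ∀ j a, dist (toEuc' d a) (zz j) < R j →
      dist (φ a) (zz j) = dist (toEuc' d a) (zz j) - τ ∧ dist (toEuc' d a) (φ a) = τ := by
    intro j a hlt
    have hr : τ < dist (toEuc' d a) (zz j) := hfar' a j
    have hrne : dist (toEuc' d a) (zz j) ≠ 0 := by linarith
    have hRgnj : Rgn j a := by
      simp only [hRgndef]; linarith
    rw [hφ_reg j a hRgnj]
    simp only [hlmapdef, if_pos hlt]
    constructor
    · rw [dist_scale (zz j) (toEuc' d a) _ (div_nonneg (by linarith) (by linarith))]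
      field_simp
    · rw [dist_scale_self (zz j) (toEuc' d a)]
      have h1 : 1 - (dist (toEuc' d a) (zz j) - τ)/(dist (toEuc' d a) (zz j))
          = τ / dist (toEuc' d a) (zz j) := by
        field_simp; ring
      rw [h1, abs_of_nonneg (div_nonneg hτ0.le (by linarith))]
      field_simp
  have hmid : ∀ j a, dist (toEuc' d a) (zz j) = R j → φ a = toEuc' d a := by
    intro j a hEq
    have hRgnj : Rgn j a := by
      simp only [hRgndef]; rw [hEq]; linarith
    rw [hφ_reg j a hRgnj]
    simp only [hlmapdef]
    rw [if_neg (by rw [hEq]; exact lt_irrefl _), if_pos hEq]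
  have houter : ∀ j a, R j < dist (toEuc' d a) (zz j) → dist (toEuc' d a) (zz j) ≤ R j + τ →
      dist (φ a) (zz j) = R j + τ ∧
      dist (toEuc' d a) (φ a) = R j + τ - dist (toEuc' d a) (zz j) := by
    intro j a hgt hle
    have hr : τ < dist (toEuc' d a) (zz j) := hfar' a j
    have hrne : dist (toEuc' d a) (zz j) ≠ 0 := by linarith
    have hRgnj : Rgn j a := by simp only [hRgndef]; exact hle
    rw [hφ_reg j a hRgnj]
    simp only [hlmapdef]
    rw [if_neg (not_lt.mpr hgt.le), if_neg (ne_of_gt hgt)]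
    have hR0j := hR0 j
    constructor
    · rw [dist_scale (zz j) (toEuc' d a) _ (div_nonneg (by linarith) (by linarith))]
      field_simp
    · rw [dist_scale_self (zz j) (toEuc' d a)]
      have h1 : 1 - (R j + τ)/(dist (toEuc' d a) (zz j))
          = (dist (toEuc' d a) (zz j) - (R j + τ)) / dist (toEuc' d a) (zz j) := by
        field_simp
      rw [h1, abs_of_nonpos (div_nonpos_of_nonpos_of_nonneg (by linarith) (by linarith))]
      field_simp; ring
  have hmove : ∀ a, dist (toEuc' d a) (φ a) ≤ τ := by
    intro a
    by_cases hex : ∃ j, Rgn j a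
    · obtain ⟨j, hj⟩ := hex
      have hj' : dist (toEuc' d a) (zz j) ≤ R j + τ := hj
      rcases lt_trichotomy (dist (toEuc' d a) (zz j)) (R j) with h1 | h1 | h1
      · rw [(hinner j a h1).2]
      · rw [hmid j a h1, dist_self]; linarith
      · rw [(houter j a h1 hj').2]; linarith
    · rw [hφ_nreg a hex, dist_self]; linarith
  have hin : ∀ j a, Rgn j a → dist (φ a) (zz j) ≤ R j + τ := by
    intro j a hj
    have hj' : dist (toEuc' d a) (zz j) ≤ R j + τ := hj
    rcases lt_trichotomy (dist (toEuc' d a) (zz j)) (R j) with h1 | h1 | h1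
    · rw [(hinner j a h1).1]; linarith
    · rw [hmid j a h1, h1]; linarith
    · rw [(houter j a h1 hj').1]
  have hout : ∀ j a, ¬ Rgn j a → R j + τ < dist (φ a) (zz j) := by
    intro j a hnj
    by_cases hex : ∃ j', Rgn j' a
    · obtain ⟨j', hj'⟩ := hex
      have hjj' : j' ≠ j := fun h => hnj (h ▸ hj')
      have h1 : R j + R j' + 4 ≤ dist (zz j) (zz j') := by
        rw [dist_comm]; have := hNdist j' j hjj'; linarith
      have h2 : dist (zz j) (zz j') ≤ dist (zz j) (toEuc' d a) + dist (toEuc' d a) (zz j') := dist_triangle _ _ _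
      have h3 : dist (toEuc' d a) (zz j') ≤ R j' + τ := hj'
      have h4 : dist (toEuc' d a) (zz j) ≤ dist (toEuc' d a) (φ a) + dist (φ a) (zz j) := dist_triangle _ _ _
      have h5 := hmove a
      rw [dist_comm (zz j) (toEuc' d a)] at h2
      linarith
    · rw [hφ_nreg a hex]
      have := not_le.mp (fun h => hnj h)
      simp only [hRgndef] at hnj
      exact not_le.mp hnj
  set Bp : ℕ → (Fin d → ℤ) := fun j => c j + N j • u with hBpdef
  have hBdist : ∀ j, dist (toEuc' d (Bp j)) (zz j) = R j := by
    intro j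
    rw [htr]
    simp only [hBpdef, add_sub_cancel_right]
    rfl
  have hclass : ∀ j a, a ≠ Bp j →
      (dist (toEuc' d a) (zz j) < R j ∧ dist (φ a) (zz j) ≤ R j - τ)
      ∨ (¬ dist (toEuc' d a) (zz j) < R j ∧ R j + τ ≤ dist (φ a) (zz j)) := by
    intro j a hne
    rcases lt_trichotomy (dist (toEuc' d a) (zz j)) (R j) with h1 | h1 | h1
    · left
      refine ⟨h1, ?_⟩
      rw [(hinner j a h1).1]
      linarith
    · exact absurd (hinj' a (Bp j) j (by rw [h1, hBdist j])) hne
    · right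
      refine ⟨not_lt.mpr h1.le, ?_⟩
      by_cases h2 : dist (toEuc' d a) (zz j) ≤ R j + τ
      · rw [(houter j a h1 h2).1]
      · exact (hout j a (by simp only [hRgndef]; exact h2)).le
  -- injectivity
  have hφinj : Function.Injective φ := by
    intro a a' heq
    by_contra hne
    by_cases hex : ∃ j, Rgn j a
    · obtain ⟨j, hj⟩ := hex
      by_cases hex' : Rgn j a'
      · -- same region
        have hda : dist (φ a) (zz j) = dist (φ a') (zz j) := by rw [heq]
        have hja : dist (toEuc' d a) (zz j) ≤ R j + τ := hj
        have hja' : dist (toEuc' d a') (zz j) ≤ R j + τ := hex'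
        have hra : τ < dist (toEuc' d a) (zz j) := hfar' a j
        have hra' : τ < dist (toEuc' d a') (zz j) := hfar' a' j
        rcases lt_trichotomy (dist (toEuc' d a) (zz j)) (R j) with h1 | h1 | h1 <;>
          rcases lt_trichotomy (dist (toEuc' d a') (zz j)) (R j) with h2 | h2 | h2
        · -- inner inner
          rw [(hinner j a h1).1, (hinner j a' h2).1] at hda
          exact hne (hinj' a a' j (by linarith))
        · rw [(hinner j a h1).1, hmid j a' h2, h2] at hda
          linarith
        · rw [(hinner j a h1).1, (houter j a' h2 hja').1] at hda
          linarith
        · rw [hmid j a h1, h1, (hinner j a' h2).1] at hda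
          linarith
        · rw [hmid j a h1, hmid j a' h2] at heq
          exact hne (toEuc'_inj d heq)
        · rw [hmid j a h1, h1, (houter j a' h2 hja').1] at hda
          linarith
        · rw [(houter j a h1 hja).1, (hinner j a' h2).1] at hda
          linarith
        · rw [(houter j a h1 hja).1, hmid j a' h2, h2] at hda
          linarith
        · -- outer outer : ray argument
          have hs : (0:ℝ) < R j + τ := by have := hR0 j; linarith
          have hr0 : (0:ℝ) < dist (toEuc' d a) (zz j) := by linarith
          have hr0' : (0:ℝ) < dist (toEuc' d a') (zz j) := by linarith
          have hφa : φ a = zz j + ((R j + τ)/(dist (toEuc' d a) (zz j))) • (toEuc' d a - zz j) := by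
            rw [hφ_reg j a hj]
            simp only [hlmapdef]
            rw [if_neg (not_lt.mpr h1.le), if_neg (ne_of_gt h1)]
          have hφa' : φ a' = zz j + ((R j + τ)/(dist (toEuc' d a') (zz j))) • (toEuc' d a' - zz j) := by
            rw [hφ_reg j a' hex']
            simp only [hlmapdef]
            rw [if_neg (not_lt.mpr h2.le), if_neg (ne_of_gt h2)]
          rw [hφa, hφa'] at heq
          have hsmul : ((R j + τ)/(dist (toEuc' d a) (zz j))) • (toEuc' d a - zz j)
              = ((R j + τ)/(dist (toEuc' d a') (zz j))) • (toEuc' d a' - zz j) :=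
            add_left_cancel heq
          have hv : toEuc' d a - zz j
              = ((dist (toEuc' d a) (zz j))/(dist (toEuc' d a') (zz j))) • (toEuc' d a' - zz j) := by
            have h3 := congrArg (fun w => ((dist (toEuc' d a) (zz j))/(R j + τ)) • w) hsmul
            simp only [smul_smul] at h3
            have h4 : dist (toEuc' d a) (zz j) / (R j + τ) * ((R j + τ) / dist (toEuc' d a) (zz j)) = 1 := by
              field_simp
            have h5 : dist (toEuc' d a) (zz j) / (R j + τ) * ((R j + τ) / dist (toEuc' d a') (zz j))
                = dist (toEuc' d a) (zz j) / dist (toEuc' d a') (zz j) := by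
              field_simp
            rw [h4, h5, one_smul] at h3
            exact h3
          have hdiff : toEuc' d a - toEuc' d a'
              = ((dist (toEuc' d a) (zz j))/(dist (toEuc' d a') (zz j)) - 1) • (toEuc' d a' - zz j) := by
            rw [sub_smul, one_smul, ← hv]
            abel
          have hnorm : ‖toEuc' d a - toEuc' d a'‖
              = |dist (toEuc' d a) (zz j) - dist (toEuc' d a') (zz j)| := by
            rw [hdiff, norm_smul, Real.norm_eq_abs]
            have h6 : ‖toEuc' d a' - zz j‖ = dist (toEuc' d a') (zz j) := (dist_eq_norm _ _).symm
            rw [h6]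
            rw [show (dist (toEuc' d a) (zz j))/(dist (toEuc' d a') (zz j)) - 1
                = (dist (toEuc' d a) (zz j) - dist (toEuc' d a') (zz j)) / dist (toEuc' d a') (zz j) by
              field_simp]
            rw [abs_div, abs_of_pos hr0']
            field_simp
          have hsep := lattice_sep hne
          rw [dist_eq_norm, hnorm] at hsep
          have habs : |dist (toEuc' d a) (zz j) - dist (toEuc' d a') (zz j)| < τ := by
            rw [abs_lt]
            constructor <;> linarith
          linarith
      · have h1 := hin j a hj
        have h2 := hout j a' hex'
        rw [heq] at h1
        linarith
    · by_cases hex' : ∃ j, Rgn j a'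
      · obtain ⟨j, hj⟩ := hex'
        have h1 := hin j a' hj
        have h2 := hout j a (not_exists.mp hex j)
        rw [heq] at h2
        linarith
      · rw [hφ_nreg a hex, hφ_nreg a' hex'] at heq
        exact hne (toEuc'_inj d heq)
  -- φ fixes the origin
  have hφ0 : φ 0 = 0 := by
    have h0 : ¬ ∃ j, Rgn j (0 : Fin d → ℤ) := by
      rintro ⟨j, hj⟩
      have h1 : toEuc' d (0 : Fin d → ℤ) = 0 := by ext i; simp [toEuc']
      have hj2 : dist (toEuc' d (0 : Fin d → ℤ)) (zz j) ≤ R j + τ := hj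
      rw [h1] at hj2
      have h2 : dist (0 : EuclideanSpace ℝ (Fin d)) (zz j) = ‖zz j‖ := by
        rw [dist_comm, dist_zero_right]
      have h4 : ‖(N j : ℝ) • e‖ ≤ ‖z + (N j : ℝ) • e‖ + ‖z‖ := by
        have h5 := norm_sub_le (z + (N j : ℝ) • e) z
        have h6 : z + (N j : ℝ) • e - z = (N j : ℝ) • e := by abel
        rw [h6] at h5
        linarith
      rw [norm_smul, Real.norm_eq_abs, henorm, mul_one] at h4
      have h7 := le_abs_self ((N j : ℝ))
      have h8 : ‖zz j‖ = ‖z + (N j : ℝ) • e‖ := by rw [hzzdef]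
      have h9 := hNlow j
      rw [h2, h8] at hj2
      linarith
    rw [hφ_nreg 0 h0]
    ext i; simp [toEuc']
  refine ⟨φ, hφinj, hφ0, ?_, ?_⟩
  · intro a
    rw [toEuc'_eq, ← dist_eq_norm]
    exact hmove a
  intro k hk
  set j := k - 1 with hjdef
  have hφB : φ (Bp j) = toEuc' d (Bp j) := hmid j (Bp j) (hBdist j)
  set b := toEuc' d (Bp j) with hbdef
  have hbA : b ∈ Set.range φ := ⟨Bp j, hφB⟩
  set Inr := {a : Fin d → ℤ | dist (toEuc' d a) (zz j) < R j} with hInrdef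
  have hInr_eq : Inr = (fun a => a + N j • u) ''
      {a : Fin d → ℤ | dist (toEuc' d a) z < dist (toEuc' d (c j)) z} := by
    ext a
    simp only [hInrdef, Set.mem_setOf_eq, Set.mem_image]
    constructor
    · intro ha
      refine ⟨a - N j • u, ?_, by abel⟩
      rw [← htr]
      exact ha
    · rintro ⟨w, hw, rfl⟩
      rw [htr]
      show dist (toEuc' d (w + N j • u - N j • u)) z < R j
      rw [add_sub_cancel_right]
      exact hw
  have hInr_fin : Inr.Finite := by
    rw [hInr_eq]; exact (hcfin j).image _
  have hInr_ncard : Inr.ncard = j := by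
    rw [hInr_eq, Set.ncard_image_of_injective _ (add_left_injective _), hccard j]
  have hInr_encard : Inr.encard = (j : ℕ∞) := by
    rw [Set.Finite.encard_eq_coe_toFinset_card hInr_fin,
      ← Set.ncard_eq_toFinset_card _ hInr_fin, hInr_ncard]
  have hBnotin : Bp j ∉ Inr := by
    simp only [hInrdef, Set.mem_setOf_eq, hBdist j]
    exact lt_irrefl _
  have hτ2 : (0:ℝ) < τ/2 := by linarith
  have hRjτ := hRτ j
  have hmain : ∀ x ∈ Metric.ball (zz j) (τ/2),
      ({p | p ∈ Set.range φ \ {b} ∧ dist x p < dist x b} = φ '' Inr ∧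
       ∀ p ∈ Set.range φ \ {b}, dist x p ≠ dist x b) := by
    intro x hx
    have hxz : dist x (zz j) < τ/2 := Metric.mem_ball.mp hx
    have hbz : dist b (zz j) = R j := by rw [hbdef]; exact hBdist j
    have hxb1 : dist x b < R j + τ/2 := by
      have h := dist_triangle x (zz j) b
      rw [dist_comm (zz j) b, hbz] at h
      linarith
    have hxb2 : R j - τ/2 < dist x b := by
      have h := dist_triangle b x (zz j)
      rw [hbz, dist_comm b x] at h
      linarith
    have hcl1 : ∀ a ∈ Inr, dist x (φ a) < dist x b := by
      intro a ha
      have haB : a ≠ Bp j := fun h => hBnotin (h ▸ ha)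
      have ha' : dist (toEuc' d a) (zz j) < R j := ha
      rcases hclass j a haB with ⟨-, h2⟩ | ⟨h1, -⟩
      · have h := dist_triangle x (zz j) (φ a)
        rw [dist_comm (zz j) (φ a)] at h
        linarith
      · exact absurd ha' h1
    have hcl2 : ∀ a : Fin d → ℤ, a ∉ Inr → a ≠ Bp j → dist x b < dist x (φ a) := by
      intro a ha haB
      rcases hclass j a haB with ⟨h1, -⟩ | ⟨-, h2⟩
      · exact absurd h1 ha
      · have h := dist_triangle (φ a) x (zz j)
        rw [dist_comm (φ a) x] at h
        linarith
    constructor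
    · ext p
      simp only [Set.mem_setOf_eq, Set.mem_diff, Set.mem_singleton_iff, Set.mem_image,
        Set.mem_range]
      constructor
      · rintro ⟨⟨⟨a, rfl⟩, hpb⟩, hplt⟩
        have haB : a ≠ Bp j := fun h => hpb (by rw [h, hφB])
        by_cases ha : a ∈ Inr
        · exact ⟨a, ha, rfl⟩
        · exact absurd hplt (not_lt.mpr (hcl2 a ha haB).le)
      · rintro ⟨a, ha, rfl⟩
        have haB : a ≠ Bp j := fun h => hBnotin (h ▸ ha)
        refine ⟨⟨⟨a, rfl⟩, ?_⟩, hcl1 a ha⟩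
        intro h
        rw [← hφB] at h
        exact haB (hφinj h)
    · rintro p ⟨⟨a, rfl⟩, hpb⟩
      simp only [Set.mem_singleton_iff] at hpb
      have haB : a ≠ Bp j := fun h => hpb (by rw [h, hφB])
      by_cases ha : a ∈ Inr
      · exact ne_of_lt (hcl1 a ha)
      · exact ne_of_gt (hcl2 a ha haB)
  have hchamber : Metric.ball (zz j) (τ/2) ⊆ chamberRegion d k (Set.range φ) b := by
    intro x hx
    obtain ⟨hset, hnet⟩ := hmain x hx
    simp only [chamberRegion, Set.mem_setOf_eq]
    constructor
    · rw [hset, Set.InjOn.encard_image (Function.Injective.injOn hφinj), hInr_encard, ← hjdef]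
    · exact hnet
  have hzmem : zz j ∈ chamberRegion d k (Set.range φ) b :=
    hchamber (Metric.mem_ball_self hτ2)
  have hsub : Metric.ball (zz j) (τ/2)
      ⊆ connectedComponentIn (chamberRegion d k (Set.range φ) b) (zz j) :=
    (convex_ball (zz j) (τ/2)).isPreconnected.subset_connectedComponentIn
      (Metric.mem_ball_self hτ2) hchamber
  refine ⟨b, hbA, connectedComponentIn (chamberRegion d k (Set.range φ) b) (zz j),
    ⟨zz j, hzmem, rfl⟩, ?_, ?_⟩
  · calc ENNReal.ofReal τ = ENNReal.ofReal (2 * (τ/2)) := by congr 1; ring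
      _ ≤ EMetric.diam (Metric.ball (zz j) (τ/2)) := ofReal_le_diam_ball hd _ hτ2
      _ ≤ _ := EMetric.diam_mono hsub
  · calc ENNReal.ofReal (unitBallVol d * (τ / 2) ^ d)
        = volume (Metric.ball (zz j) (τ/2)) := by
          rw [volume_ball_eq hd _ (le_of_lt hτ2)]
          rfl
      _ ≤ _ := measure_mono hsub
end
end
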